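/- arXiv:1510.06561 — 4 statements merged into one kernel-verified Lean document; each statement's English description precedes it below -/
import Mathlib

section
/- Let $X_r$ and $v_s$ be vector fields on $\mathbb{C}^n$ whose components are homogeneous polynomials of degree $r+1$ and $s+1$ respectively, with polynomial norms $\|X_r\|$ and $\|v_s\|$ (sum of absolute values of coefficients of all components). Then the Lie bracket $L_{X_r} v_s$, whose $j$-th component is $\sum_{l=1}^n \left( X_{r,l}\,\partial v_{s,j}/\partial z_l - v_{s,l}\,\partial X_{r,j}/\partial z_l \right)$, satisfies $\|L_{X_r} v_s\| \le (r+s+2)\,\|X_r\|\,\|v_s\|$. -/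
/-!
The polynomial norm is the `ℓ¹` norm of the coefficient sequence, so it is subadditive and
submultiplicative (expand one factor into monomials). The derivative `∂_l` multiplies the
coefficient of `z^m` by `m_l`, which is at most the degree, so `‖∂_l f‖ ≤ deg f · ‖f‖`.
Summing the resulting bound for each term of the bracket over `j` and `l` gives
`(s + 1) ‖X‖ ‖v‖ + (r + 1) ‖v‖ ‖X‖`.
-/

open Finset

/-- The polynomial norm: sum of the absolute values of the coefficients. -/
noncomputable def pnorm {n : ℕ} (f : MvPolynomial (Fin n) ℂ) : ℝ :=
  ∑ m ∈ f.support, ‖f.coeff m‖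

/-- The polynomial norm of a vector field: sum of the norms of the components. -/
noncomputable def vnorm {n : ℕ} (X : Fin n → MvPolynomial (Fin n) ℂ) : ℝ :=
  ∑ j, pnorm (X j)

/-- The Lie bracket (commutator) of vector fields:
`(L_X v)_j = ∑ l, (X l * ∂_l v_j - v l * ∂_l X_j)`. -/
noncomputable def lieBr {n : ℕ} (X v : Fin n → MvPolynomial (Fin n) ℂ) :
    Fin n → MvPolynomial (Fin n) ℂ :=
  fun j => ∑ l, (X l * MvPolynomial.pderiv l (v j) - v l * MvPolynomial.pderiv l (X j))

open MvPolynomial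

section PolynomialNorm

variable {n : ℕ}

lemma pnorm_eq_sum_of_support_subset (f : MvPolynomial (Fin n) ℂ) {S : Finset (Fin n →₀ ℕ)}
    (h : f.support ⊆ S) : pnorm f = ∑ m ∈ S, ‖f.coeff m‖ :=
  Finset.sum_subset h fun m _ hm => by simp [notMem_support_iff.mp hm]

lemma pnorm_nonneg (f : MvPolynomial (Fin n) ℂ) : 0 ≤ pnorm f :=
  Finset.sum_nonneg fun _ _ => norm_nonneg _

@[simp]
lemma pnorm_neg (f : MvPolynomial (Fin n) ℂ) : pnorm (-f) = pnorm f := by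
  simp [pnorm]

lemma pnorm_add_le (f g : MvPolynomial (Fin n) ℂ) : pnorm (f + g) ≤ pnorm f + pnorm g := by
  classical
  rw [pnorm_eq_sum_of_support_subset (f + g) support_add,
    pnorm_eq_sum_of_support_subset f Finset.subset_union_left,
    pnorm_eq_sum_of_support_subset g Finset.subset_union_right, ← Finset.sum_add_distrib]
  exact Finset.sum_le_sum fun m _ => by simpa using norm_add_le (f.coeff m) (g.coeff m)

lemma pnorm_sub_le (f g : MvPolynomial (Fin n) ℂ) : pnorm (f - g) ≤ pnorm f + pnorm g := by
  simpa [sub_eq_add_neg] using pnorm_add_le f (-g)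

lemma pnorm_sum_le {ι : Type*} (s : Finset ι) (F : ι → MvPolynomial (Fin n) ℂ) :
    pnorm (∑ i ∈ s, F i) ≤ ∑ i ∈ s, pnorm (F i) := by
  classical
  induction s using Finset.induction_on with
  | empty => simp [pnorm]
  | insert i s hi ih =>
    rw [Finset.sum_insert hi, Finset.sum_insert hi]
    exact (pnorm_add_le _ _).trans (by gcongr)

lemma pnorm_monomial_le (a : Fin n →₀ ℕ) (c : ℂ) : pnorm (monomial a c) ≤ ‖c‖ := by
  rcases eq_or_ne c 0 with rfl | hc
  · simp [pnorm]
  · simp [pnorm, support_monomial, hc]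

lemma pnorm_monomial_mul_le (a : Fin n →₀ ℕ) (c : ℂ) (g : MvPolynomial (Fin n) ℂ) :
    pnorm (monomial a c * g) ≤ ‖c‖ * pnorm g := by
  classical
  have hsupp : (monomial a c * g).support ⊆ g.support.map (addLeftEmbedding a) := by
    intro m hm
    obtain ⟨x, hx, y, hy, rfl⟩ := Finset.mem_add.mp (support_mul _ _ hm)
    obtain rfl : x = a := by simpa using support_monomial_subset hx
    exact Finset.mem_map.mpr ⟨y, hy, rfl⟩
  rw [pnorm_eq_sum_of_support_subset _ hsupp, Finset.sum_map, pnorm, Finset.mul_sum]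
  refine le_of_eq (Finset.sum_congr rfl fun m _ => ?_)
  rw [addLeftEmbedding_apply, coeff_monomial_mul, norm_mul]

lemma pnorm_mul_le (f g : MvPolynomial (Fin n) ℂ) : pnorm (f * g) ≤ pnorm f * pnorm g := by
  conv_lhs => rw [f.as_sum, Finset.sum_mul]
  refine (pnorm_sum_le _ _).trans ?_
  rw [pnorm, Finset.sum_mul]
  exact Finset.sum_le_sum fun m _ => pnorm_monomial_mul_le m (f.coeff m) g

lemma pnorm_pderiv_le (l : Fin n) (f : MvPolynomial (Fin n) ℂ) :
    pnorm (pderiv l f) ≤ f.degreeOf l * pnorm f := by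
  conv_lhs => rw [f.as_sum, map_sum]
  refine (pnorm_sum_le _ _).trans ?_
  rw [pnorm, Finset.mul_sum]
  refine Finset.sum_le_sum fun m hm => ?_
  rw [pderiv_monomial, mul_comm]
  refine (pnorm_monomial_le _ _).trans ?_
  rw [norm_mul, Complex.norm_natCast]
  gcongr
  exact_mod_cast monomial_le_degreeOf l hm

lemma pnorm_mul_pderiv_le {d : ℕ} (l : Fin n) (f g : MvPolynomial (Fin n) ℂ)
    (hg : g.totalDegree ≤ d) : pnorm (f * pderiv l g) ≤ d * pnorm f * pnorm g := by
  have hdeg : (g.degreeOf l : ℝ) ≤ d := by exact_mod_cast (g.degreeOf_le_totalDegree l).trans hg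
  calc pnorm (f * pderiv l g) ≤ pnorm f * pnorm (pderiv l g) := pnorm_mul_le _ _
    _ ≤ pnorm f * (d * pnorm g) := by
        gcongr
        · exact pnorm_nonneg f
        · exact (pnorm_pderiv_le l g).trans (by gcongr; exact pnorm_nonneg g)
    _ = d * pnorm f * pnorm g := by ring

lemma pnorm_lieBr_le {p q : ℕ} (X v : Fin n → MvPolynomial (Fin n) ℂ)
    (hX : ∀ j, (X j).totalDegree ≤ p) (hv : ∀ j, (v j).totalDegree ≤ q) (j : Fin n) :
    pnorm (lieBr X v j) ≤
      ∑ l, (q * pnorm (X l) * pnorm (v j) + p * pnorm (v l) * pnorm (X j)) :=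
  (pnorm_sum_le _ _).trans <| Finset.sum_le_sum fun l _ =>
    (pnorm_sub_le _ _).trans <|
      add_le_add (pnorm_mul_pderiv_le l _ _ (hv j)) (pnorm_mul_pderiv_le l _ _ (hX j))

lemma vnorm_lieBr_le {p q : ℕ} (X v : Fin n → MvPolynomial (Fin n) ℂ)
    (hX : ∀ j, (X j).totalDegree ≤ p) (hv : ∀ j, (v j).totalDegree ≤ q) :
    vnorm (lieBr X v) ≤ (p + q) * vnorm X * vnorm v := by
  calc vnorm (lieBr X v)
      ≤ ∑ j, ∑ l, (q * pnorm (X l) * pnorm (v j) + p * pnorm (v l) * pnorm (X j)) :=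
        Finset.sum_le_sum fun j _ => pnorm_lieBr_le X v hX hv j
    _ = (p + q) * vnorm X * vnorm v := by
        simp only [vnorm, Finset.sum_add_distrib, ← Finset.sum_mul, ← Finset.mul_sum]
        ring

end PolynomialNorm

/-- if the components of `X` are homogeneous of degree `r+1` and those
of `v` are homogeneous of degree `s+1`, then `‖L_X v‖ ≤ (r+s+2) ‖X‖ ‖v‖`. -/
theorem lie_bracket_polynomial_norm_bound (n r s : ℕ)
    (X v : Fin n → MvPolynomial (Fin n) ℂ)
    (hX : ∀ j, (X j).IsHomogeneous (r + 1))
    (hv : ∀ j, (v j).IsHomogeneous (s + 1)) :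
    vnorm (lieBr X v) ≤ (r + s + 2 : ℝ) * vnorm X * vnorm v := by
  calc vnorm (lieBr X v) ≤ ((r + 1 : ℕ) + (s + 1 : ℕ) : ℝ) * vnorm X * vnorm v :=
        vnorm_lieBr_le X v (fun j => (hX j).totalDegree_le) (fun j => (hv j).totalDegree_le)
    _ = (r + s + 2 : ℝ) * vnorm X * vnorm v := by push_cast; ring
end

section
/- Let sequences $(\eta_s)_{s\ge 1}$ of nonnegative reals satisfy $\eta_1 = 1$ and, for $s > 1$, $\eta_s \le C^{s-1} + 2(s+2)A \sum_{j=1}^{s-1} \eta_j \eta_{s-j}$, where $A > 0$ and $C \ge 0$ are constants. Fix $r \ge 1$. Then for all $1 \le s \le r$ one has $\eta_s \le (C + 2(r+2)A)^{s-1} \mu_s$, where $\mu_1 = 1$ and $\mu_s = \sum_{j=1}^{s-1} \mu_j \mu_{s-j}$; consequently $\eta_s \le B_r^{s-1}/s$ with $B_r = 4C + 8(r+2)A$. -/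
open Finset

/-! Induct on `s` with `D = C + 2(r+2)A`. For `s ≤ r` the coefficient `2(s+2)A` is at most
`2(r+2)A`, and bounding both factors of the convolution by the induction hypothesis turns it into
`D^(s-2)` times the Catalan convolution, i.e. `D^(s-2) μ_s`; since `μ_s ≥ 1` also
`C^(s-1) ≤ C D^(s-2) μ_s`, and the two terms add up to `D^(s-1) μ_s`. Finally `μ_s` is the Catalan
number `catalan (s-1) = centralBinom (s-1) / s ≤ 4^(s-1) / s`. -/

theorem one_le_catalan (n : ℕ) : 1 ≤ catalan n := by
  have h := succ_mul_catalan_eq_centralBinom n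
  rw [Nat.one_le_iff_ne_zero]
  rintro h0
  rw [h0, mul_zero] at h
  exact n.centralBinom_ne_zero h.symm

theorem catalan_le_four_pow_div (n : ℕ) : (catalan n : ℝ) ≤ 4 ^ n / (n + 1) := by
  rw [le_div_iff₀ (by positivity), mul_comm]
  exact_mod_cast (succ_mul_catalan_eq_centralBinom n).trans_le n.centralBinom_le_four_pow

theorem sum_Ico_one_eq_sum_antidiagonal {M : Type*} [AddCommMonoid M] (f : ℕ → ℕ → M) (n : ℕ) :
    ∑ j ∈ Ico 1 (n + 2), f j (n + 2 - j) = ∑ p ∈ antidiagonal n, f (p.1 + 1) (p.2 + 1) := by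
  rw [Nat.sum_antidiagonal_eq_sum_range_succ (fun i k => f (i + 1) (k + 1)), sum_Ico_eq_sum_range]
  refine sum_congr rfl fun i hi => ?_
  have hi : i < n + 1 := mem_range.1 hi
  rw [add_comm 1 i, show n + 2 - (i + 1) = n - i + 1 by omega]

theorem eq_catalan_of_rec {μ : ℕ → ℝ} (h1 : μ 1 = 1)
    (hrec : ∀ s, 2 ≤ s → μ s = ∑ j ∈ Ico 1 s, μ j * μ (s - j)) (n : ℕ) :
    μ (n + 1) = catalan n := by
  induction n using Nat.strong_induction_on with
  | _ n ih =>
  rcases n with _ | n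
  · simpa using h1
  rw [hrec (n + 2) (by omega), sum_Ico_one_eq_sum_antidiagonal (fun j k => μ j * μ k),
    catalan_succ']
  push_cast
  refine sum_congr rfl fun p hp => ?_
  have hp := mem_antidiagonal.1 hp
  rw [ih p.1 (by omega), ih p.2 (by omega)]

theorem le_pow_mul_catalan_of_le_add_mul_convolution {η : ℕ → ℝ} {C K : ℝ} {r : ℕ}
    (hC : 0 ≤ C) (hK : 0 ≤ K) (hη : ∀ s, 0 ≤ η s) (hη1 : η 1 ≤ 1)
    (hrec : ∀ s, 2 ≤ s → s ≤ r →
      η s ≤ C ^ (s - 1) + K * ∑ j ∈ Ico 1 s, η j * η (s - j))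
    (n : ℕ) (hn : n + 1 ≤ r) :
    η (n + 1) ≤ (C + K) ^ n * catalan n := by
  induction n using Nat.strong_induction_on with
  | _ n ih =>
  rcases n with _ | n
  · simpa using hη1
  set D := C + K
  have hsum : ∑ j ∈ Ico 1 (n + 2), η j * η (n + 2 - j) ≤ D ^ n * catalan (n + 1) := by
    rw [sum_Ico_one_eq_sum_antidiagonal (fun j k => η j * η k), catalan_succ']
    push_cast
    rw [mul_sum]
    refine sum_le_sum fun p hp => ?_
    have hp := mem_antidiagonal.1 hp
    calc η (p.1 + 1) * η (p.2 + 1)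
        ≤ (D ^ p.1 * catalan p.1) * (D ^ p.2 * catalan p.2) :=
          mul_le_mul (ih _ (by omega) (by omega)) (ih _ (by omega) (by omega)) (hη _)
            (by positivity)
      _ = D ^ n * (catalan p.1 * catalan p.2) := by rw [← hp, pow_add]; ring
  have hCpow : C ^ (n + 1) ≤ C * (D ^ n * catalan (n + 1)) := by
    rw [pow_succ']
    refine mul_le_mul_of_nonneg_left ?_ hC
    calc C ^ n ≤ D ^ n := pow_le_pow_left₀ hC (le_add_of_nonneg_right hK) n
      _ ≤ D ^ n * catalan (n + 1) :=
        le_mul_of_one_le_right (by positivity) (by exact_mod_cast one_le_catalan _)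
  calc η (n + 2) ≤ C ^ (n + 1) + K * ∑ j ∈ Ico 1 (n + 2), η j * η (n + 2 - j) :=
        hrec (n + 2) (by omega) hn
    _ ≤ C * (D ^ n * catalan (n + 1)) + K * (D ^ n * catalan (n + 1)) :=
        add_le_add hCpow (mul_le_mul_of_nonneg_left hsum hK)
    _ = D ^ (n + 1) * catalan (n + 1) := by ring

theorem eta_sequence_bound_general (A C : ℝ) (hA : 0 < A) (hC : 0 ≤ C)
    (η : ℕ → ℝ) (hηnn : ∀ s, 0 ≤ η s) (hη1 : η 1 = 1)
    (hηrec : ∀ s, 2 ≤ s →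
      η s ≤ C ^ (s - 1) + 2 * (s + 2) * A * ∑ j ∈ Finset.Ico 1 s, η j * η (s - j))
    (μ : ℕ → ℝ) (hμ1 : μ 1 = 1)
    (hμrec : ∀ s, 2 ≤ s → μ s = ∑ j ∈ Finset.Ico 1 s, μ j * μ (s - j))
    (r : ℕ) :
    ∀ s, 1 ≤ s → s ≤ r →
      η s ≤ (C + 2 * (r + 2) * A) ^ (s - 1) * μ s ∧
      η s ≤ (4 * C + 8 * (r + 2) * A) ^ (s - 1) / s := by
  intro s hs hsr
  obtain ⟨n, rfl⟩ : ∃ n, s = n + 1 := ⟨s - 1, by omega⟩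
  have hrec : ∀ s, 2 ≤ s → s ≤ r → η s ≤ C ^ (s - 1) +
      2 * ((r : ℝ) + 2) * A * ∑ j ∈ Ico 1 s, η j * η (s - j) := fun s hs hsr => by
    refine (hηrec s hs).trans (add_le_add_right (mul_le_mul_of_nonneg_right ?_
      (sum_nonneg fun j _ => mul_nonneg (hηnn j) (hηnn _))) _)
    gcongr
  have hbound := le_pow_mul_catalan_of_le_add_mul_convolution hC (by positivity) hηnn hη1.le
    hrec n hsr
  rw [eq_catalan_of_rec hμ1 hμrec n, Nat.add_sub_cancel]
  refine ⟨hbound, hbound.trans ?_⟩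
  calc (C + 2 * ((r : ℝ) + 2) * A) ^ n * catalan n
      ≤ (C + 2 * ((r : ℝ) + 2) * A) ^ n * (4 ^ n / (n + 1)) :=
        mul_le_mul_of_nonneg_left (catalan_le_four_pow_div n) (by positivity)
    _ = (4 * C + 8 * ((r : ℝ) + 2) * A) ^ n / ((n + 1 : ℕ) : ℝ) := by
        rw [show 4 * C + 8 * ((r : ℝ) + 2) * A = 4 * (C + 2 * (r + 2) * A) by ring,
          mul_pow]
        push_cast; ring

/-- if `η 1 = 1` and
`η s ≤ C^(s-1) + 2(s+2) A ∑_{j=1}^{s-1} η j η (s-j)` for `s > 1`, then for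
`1 ≤ s ≤ r` one has `η s ≤ (C + 2(r+2)A)^(s-1) μ s` with `μ` the Catalan-type
sequence, and consequently `η s ≤ B_r^(s-1)/s` with `B_r = 4C + 8(r+2)A`. -/
theorem eta_sequence_bound (A C : ℝ) (hA : 0 < A) (hC : 0 ≤ C)
    (η : ℕ → ℝ) (hηnn : ∀ s, 0 ≤ η s) (hη1 : η 1 = 1)
    (hηrec : ∀ s, 2 ≤ s →
      η s ≤ C ^ (s - 1) + 2 * (s + 2) * A * ∑ j ∈ Finset.Ico 1 s, η j * η (s - j))
    (μ : ℕ → ℝ) (hμ1 : μ 1 = 1)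
    (hμrec : ∀ s, 2 ≤ s → μ s = ∑ j ∈ Finset.Ico 1 s, μ j * μ (s - j))
    (r : ℕ) (hr : 1 ≤ r) :
    ∀ s, 1 ≤ s → s ≤ r →
      η s ≤ (C + 2 * (r + 2) * A) ^ (s - 1) * μ s ∧
      η s ≤ (4 * C + 8 * (r + 2) * A) ^ (s - 1) / s :=
  eta_sequence_bound_general A C hA hC η hηnn hη1 hηrec μ hμ1 hμrec r
end

section
/- (Estimate of the generating sequence.) Let $\omega \in \mathbb{R}^n$ with divisor sequence $(\alpha_s)$ (defined from $\omega$ as the minimum modulus of nonzero divisors $e^{i\langle k,\omega\rangle \pm i\omega_j}-1$ with $|k| \le s+1$, and $\alpha_0 = 1$) and let $T_0 = 1$, $T_s = T_{s-1}/\alpha_s$. Suppose the sequence $W = \{W_s\}$ of homogeneous polynomial vector fields satisfies $\|W_s\| \le C^{s-1} A$ for constants $A > 0$, $C \ge 0$. Fix $r \ge 1$. Then the truncated generating sequence $X^{(r)} = \{X_1,\ldots,X_r,0,\ldots\}$ and normal form terms $Z_1,\ldots,Z_r$ produced by recursively solving the homological equations $D_\omega X_s + Z_s = \Psi_s$ (with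 $\Psi_1 = W_1$ and $\Psi_s = W_s + \sum_{j=1}^{s-1}\frac{j}{s}(E^X_{s-j}W_j - E^Z_{s-j}R_\omega X_j)$, taking $Z_s = P_{\mathcal N}\Psi_s$ and $X_s = D_\omega^{-1}P_{\mathcal R}\Psi_s$) satisfy, for $1 \le s \le r$, $\|X_s\| \le T_s\, B_r^{s-1} A / s$ and $\|Z_s\| \le T_{s-1}\, B_r^{s-1} A / s$, where $B_r = 4C + 8(r+2)A$. -/
open Finset

/-- The Lie derivative of a function along a polynomial vector field. -/
noncomputable def lieV {σ : Type*} [Fintype σ] [DecidableEq σ]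
    (V : σ → MvPolynomial σ ℂ) (f : MvPolynomial σ ℂ) : MvPolynomial σ ℂ :=
  ∑ l, V l * MvPolynomial.pderiv l f

/-- The Lie transform operators `E_0 = id`, `E_s = ∑_{j=1}^s (j/s) L_j ∘ E_{s-j}`. -/
noncomputable def EopF {F : Type*} [AddCommGroup F] [Module ℂ F]
    (L : ℕ → (F → F)) : ℕ → (F → F)
  | 0 => id
  | s + 1 => ((s + 1 : ℕ) : ℂ)⁻¹ •
      ∑ j ∈ Finset.range (s + 1), (((j + 1 : ℕ) : ℂ)) • (L (j + 1) ∘ EopF L (s - j))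
  decreasing_by exact Nat.lt_succ_of_le (Nat.sub_le s j)

/-- The polynomial norm: sum of the absolute values of the coefficients. -/
noncomputable def pnormP {σ : Type*} (f : MvPolynomial σ ℂ) : ℝ :=
  ∑ m ∈ f.support, ‖f.coeff m‖

/-- The polynomial norm of a vector field: sum of the norms of the components. -/
noncomputable def vnormP {σ : Type*} [Fintype σ] (V : σ → MvPolynomial σ ℂ) : ℝ :=
  ∑ l, pnormP (V l)

/-- The eigenvalues of the (complexified, diagonal) rotation `Λ_ω`. -/
noncomputable def lamRot {n : ℕ} (ω : Fin n → ℝ) : Fin n ⊕ Fin n → ℂ :=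
  Sum.elim (fun i => Complex.exp (-(Complex.I * (ω i : ℂ))))
    (fun i => Complex.exp (Complex.I * (ω i : ℂ)))

/-- The action of the rotation on functions: `(R_ω f)(z) = f(Λ_ω z)`. -/
noncomputable def Rfun {n : ℕ} (ω : Fin n → ℝ)
    (f : MvPolynomial (Fin n ⊕ Fin n) ℂ) : MvPolynomial (Fin n ⊕ Fin n) ℂ :=
  MvPolynomial.aeval (fun l => MvPolynomial.C (lamRot ω l) * MvPolynomial.X l) f

/-- The pushforward action of the rotation on vector fields:
`(R_ω V)(z) = Λ_ω⁻¹ V(Λ_ω z)`. -/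
noncomputable def RVF {n : ℕ} (ω : Fin n → ℝ)
    (V : Fin n ⊕ Fin n → MvPolynomial (Fin n ⊕ Fin n) ℂ) :
    Fin n ⊕ Fin n → MvPolynomial (Fin n ⊕ Fin n) ℂ :=
  fun l => MvPolynomial.C (lamRot ω l)⁻¹ * Rfun ω (V l)

/-- The eigenvalue of `D_ω = R_ω - id` on the monomial vector field `z^m e_l`. -/
noncomputable def cEig {n : ℕ} (ω : Fin n → ℝ) (m : (Fin n ⊕ Fin n) →₀ ℕ)
    (l : Fin n ⊕ Fin n) : ℂ :=
  (lamRot ω l)⁻¹ * (m.prod fun i e => lamRot ω i ^ e) - 1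

/-- The divisor `e^{i⟨k,ω⟩ ± iω_j} - 1` (`σ = true` for `+`, `false` for `-`). -/
noncomputable def dvsor {n : ℕ} (ω : Fin n → ℝ) (k : Fin n → ℕ) (j : Fin n)
    (σ : Bool) : ℂ :=
  Complex.exp (Complex.I * ((∑ i, (k i : ℝ) * ω i : ℝ) : ℂ) +
    (if σ then 1 else -1) * Complex.I * (ω j : ℂ)) - 1

/-- `β_s`: the minimum modulus of the nonzero divisors with `|k| = s+1`. -/
noncomputable def betaSeq {n : ℕ} (ω : Fin n → ℝ) (s : ℕ) : ℝ :=
  sInf {x : ℝ | ∃ (k : Fin n → ℕ) (j : Fin n) (σ : Bool),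
    (∑ i, k i) = s + 1 ∧ dvsor ω k j σ ≠ 0 ∧ x = ‖dvsor ω k j σ‖}

/-- `α_0 = 1`, `α_s = min (β_s, α_{s-1})`. -/
noncomputable def alphaSeq {n : ℕ} (ω : Fin n → ℝ) : ℕ → ℝ
  | 0 => 1
  | s + 1 => min (betaSeq ω (s + 1)) (alphaSeq ω s)

/-- `T_0 = 1`, `T_s = T_{s-1}/α_s`. -/
noncomputable def Tseq {n : ℕ} (ω : Fin n → ℝ) : ℕ → ℝ
  | 0 => 1
  | s + 1 => Tseq ω s / alphaSeq ω (s + 1)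

/-- The right-hand sides `Ψ_s` of the homological equations:
`Ψ_s = W_s + ∑_{j=1}^{s-1} (j/s)(E^X_{s-j} W_j - E^Z_{s-j} R_ω X_j)`. -/
noncomputable def PsiRHS {n : ℕ} (ω : Fin n → ℝ)
    (W X Z : ℕ → (Fin n ⊕ Fin n → MvPolynomial (Fin n ⊕ Fin n) ℂ)) (s : ℕ) :
    Fin n ⊕ Fin n → MvPolynomial (Fin n ⊕ Fin n) ℂ :=
  W s + ((s : ℂ))⁻¹ • ∑ j ∈ Finset.Ico 1 s, ((j : ℂ)) •
    ((fun l => EopF (fun i => lieV (X i)) (s - j) (W j l)) -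
     (fun l => EopF (fun i => lieV (Z i)) (s - j) (RVF ω (X j) l)))

/-!
The bounds are proved by induction on `s` in the sharper form
`‖X_s‖ ≤ T_s λ_s δ^(s-1) A`, `‖Z_s‖ ≤ T_(s-1) λ_s δ^(s-1) A`, where `δ = C + 2(r+2)A = B_r / 4`.
Since `D_ω` is diagonal on monomial vector fields, the homological equation gives
`‖X_s‖ ≤ ‖Ψ_s‖ / α_s` and `‖Z_s‖ ≤ ‖Ψ_s‖` coefficientwise. In `Ψ_s` every Lie derivative
costs at most a factor `r ‖X_j‖` (the degrees stay below `r + 1`), and `T_a T_b ≤ T_(a+b)`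
collects the small divisors into `T_(s-1)`. What is left is a pair of convolution
inequalities for `λ_s` and for the coefficients `ρ_m` of the Lie transforms, which hold for
`s λ_s = (s + 1) C_(s-1)` and `ρ_m = C_m / 2` (Catalan numbers `C_k`, with `λ_1 = ρ_0 = 1`)
because `C_(k+1) = ∑ C_i C_(k-i)`; finally `s λ_s ≤ 4^(s-1)`.
-/

open MvPolynomial

section PolynomialNorm

variable {σ : Type*}

lemma pnormP_nonneg (f : MvPolynomial σ ℂ) : 0 ≤ pnormP f :=
  sum_nonneg fun _ _ => norm_nonneg _

lemma pnormP_eq_sum_of_support_subset {f : MvPolynomial σ ℂ} {t : Finset (σ →₀ ℕ)}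
    (h : f.support ⊆ t) : pnormP f = ∑ m ∈ t, ‖f.coeff m‖ :=
  sum_subset h fun m _ hm => by simp [notMem_support_iff.mp hm]

lemma pnormP_le_of_norm_coeff_le {f g : MvPolynomial σ ℂ} {c : ℝ}
    (h : ∀ m, ‖f.coeff m‖ ≤ c * ‖g.coeff m‖) : pnormP f ≤ c * pnormP g := by
  have hsupp : f.support ⊆ g.support := fun m hm => by
    rw [mem_support_iff] at hm ⊢
    exact fun hg => hm (by simpa [hg] using h m)
  rw [pnormP_eq_sum_of_support_subset hsupp, pnormP, mul_sum]
  exact sum_le_sum fun m _ => h m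

lemma pnormP_add_le (f g : MvPolynomial σ ℂ) : pnormP (f + g) ≤ pnormP f + pnormP g := by
  classical
  rw [pnormP_eq_sum_of_support_subset support_add,
    pnormP_eq_sum_of_support_subset subset_union_left,
    pnormP_eq_sum_of_support_subset subset_union_right, ← sum_add_distrib]
  exact sum_le_sum fun m _ => by rw [coeff_add]; exact norm_add_le _ _

lemma pnormP_sub_le (f g : MvPolynomial σ ℂ) : pnormP (f - g) ≤ pnormP f + pnormP g := by
  rw [sub_eq_add_neg]
  refine (pnormP_add_le _ _).trans_eq ?_
  simp [pnormP, support_neg]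

lemma pnormP_sum_le {ι : Type*} (t : Finset ι) (F : ι → MvPolynomial σ ℂ) :
    pnormP (∑ i ∈ t, F i) ≤ ∑ i ∈ t, pnormP (F i) := by
  classical
  induction t using Finset.induction_on with
  | empty => simp [pnormP]
  | insert i t hi ih =>
    rw [sum_insert hi, sum_insert hi]
    exact (pnormP_add_le _ _).trans (add_le_add le_rfl ih)

lemma pnormP_smul_le (c : ℂ) (f : MvPolynomial σ ℂ) : pnormP (c • f) ≤ ‖c‖ * pnormP f :=
  pnormP_le_of_norm_coeff_le fun m => by rw [coeff_smul, smul_eq_mul, norm_mul]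

lemma pnormP_monomial (d : σ →₀ ℕ) (a : ℂ) : pnormP (monomial d a) = ‖a‖ := by
  classical
  rw [pnormP_eq_sum_of_support_subset support_monomial_subset, sum_singleton, coeff_monomial,
    if_pos rfl]

lemma pnormP_monomial_mul_le (d : σ →₀ ℕ) (a : ℂ) (g : MvPolynomial σ ℂ) :
    pnormP (monomial d a * g) ≤ ‖a‖ * pnormP g := by
  conv_lhs => rw [g.as_sum, mul_sum]
  refine (pnormP_sum_le _ _).trans ?_
  rw [pnormP, mul_sum]
  exact sum_le_sum fun m _ => by rw [monomial_mul, pnormP_monomial, norm_mul]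

lemma pnormP_mul_le (f g : MvPolynomial σ ℂ) : pnormP (f * g) ≤ pnormP f * pnormP g := by
  conv_lhs => rw [f.as_sum, sum_mul]
  refine (pnormP_sum_le _ _).trans ?_
  rw [pnormP, sum_mul]
  exact sum_le_sum fun m _ => pnormP_monomial_mul_le _ _ _

variable [Fintype σ]

lemma vnormP_nonneg (V : σ → MvPolynomial σ ℂ) : 0 ≤ vnormP V :=
  sum_nonneg fun _ _ => pnormP_nonneg _

lemma vnormP_le_of_pnormP_le {V U : σ → MvPolynomial σ ℂ} {c : ℝ}
    (h : ∀ l, pnormP (V l) ≤ c * pnormP (U l)) : vnormP V ≤ c * vnormP U := by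
  rw [vnormP, vnormP, mul_sum]
  exact sum_le_sum fun l _ => h l

lemma vnormP_add_le (V U : σ → MvPolynomial σ ℂ) : vnormP (V + U) ≤ vnormP V + vnormP U := by
  rw [vnormP, vnormP, vnormP, ← sum_add_distrib]
  exact sum_le_sum fun l _ => pnormP_add_le _ _

lemma vnormP_sub_le (V U : σ → MvPolynomial σ ℂ) : vnormP (V - U) ≤ vnormP V + vnormP U := by
  rw [vnormP, vnormP, vnormP, ← sum_add_distrib]
  exact sum_le_sum fun l _ => pnormP_sub_le _ _

lemma vnormP_smul_le (c : ℂ) (V : σ → MvPolynomial σ ℂ) : vnormP (c • V) ≤ ‖c‖ * vnormP V :=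
  vnormP_le_of_pnormP_le fun l => pnormP_smul_le c (V l)

lemma vnormP_sum_le {ι : Type*} (t : Finset ι) (F : ι → σ → MvPolynomial σ ℂ) :
    vnormP (∑ i ∈ t, F i) ≤ ∑ i ∈ t, vnormP (F i) := by
  simp only [vnormP]
  rw [sum_comm]
  exact sum_le_sum fun l _ => by rw [Finset.sum_apply]; exact pnormP_sum_le _ _

end PolynomialNorm

section LieDerivative

variable {σ : Type*}

lemma MvPolynomial.IsHomogeneous.degree_eq {f : MvPolynomial σ ℂ} {d : ℕ}
    (hf : f.IsHomogeneous d) {m : σ →₀ ℕ} (hm : f.coeff m ≠ 0) : m.degree = d := by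
  rw [Finsupp.degree_eq_weight_one]
  exact hf hm

lemma pnormP_pderiv_le {f : MvPolynomial σ ℂ} {d : ℕ} (hf : f.IsHomogeneous d) (l : σ) :
    pnormP (pderiv l f) ≤ d * pnormP f := by
  conv_lhs => rw [f.as_sum, map_sum]
  refine (pnormP_sum_le _ _).trans ?_
  rw [pnormP, mul_sum]
  refine sum_le_sum fun m hm => ?_
  have hml : (m l : ℝ) ≤ d := by
    exact_mod_cast (Finsupp.le_degree l m).trans_eq (hf.degree_eq (mem_support_iff.mp hm))
  rw [pderiv_monomial, pnormP_monomial, norm_mul, Complex.norm_natCast, mul_comm]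
  exact mul_le_mul_of_nonneg_right hml (norm_nonneg _)

variable [Fintype σ] [DecidableEq σ]

lemma pnormP_lieV_le (V : σ → MvPolynomial σ ℂ) {f : MvPolynomial σ ℂ} {d : ℕ}
    (hf : f.IsHomogeneous d) : pnormP (lieV V f) ≤ d * vnormP V * pnormP f := by
  refine (pnormP_sum_le _ _).trans ?_
  rw [vnormP, mul_sum, sum_mul]
  refine sum_le_sum fun l _ => (pnormP_mul_le _ _).trans ?_
  calc pnormP (V l) * pnormP (pderiv l f) ≤ pnormP (V l) * (d * pnormP f) :=
        mul_le_mul_of_nonneg_left (pnormP_pderiv_le hf l) (pnormP_nonneg _)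
    _ = d * pnormP (V l) * pnormP f := by ring

lemma MvPolynomial.IsHomogeneous.lieV {V : σ → MvPolynomial σ ℂ} {w d : ℕ}
    (hV : ∀ l, (V l).IsHomogeneous (w + 1)) {f : MvPolynomial σ ℂ} (hf : f.IsHomogeneous d) :
    (lieV V f).IsHomogeneous (w + d) := by
  obtain _ | d := d
  · rw [← totalDegree_zero_iff_isHomogeneous, totalDegree_eq_zero_iff_eq_C] at hf
    rw [hf]
    simp [_root_.lieV, isHomogeneous_zero]
  · refine IsHomogeneous.sum _ _ _ fun l _ => ?_
    simpa [add_assoc, add_comm 1 d] using (hV l).mul hf.pderiv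

end LieDerivative

section Rotation

variable {n : ℕ} (ω : Fin n → ℝ)

lemma norm_lamRot (l : Fin n ⊕ Fin n) : ‖lamRot ω l‖ = 1 := by
  cases l <;> simp [lamRot, Complex.norm_exp]

lemma Rfun_monomial (d : (Fin n ⊕ Fin n) →₀ ℕ) (a : ℂ) :
    Rfun ω (monomial d a) = monomial d ((d.prod fun i e => lamRot ω i ^ e) * a) := by
  rw [Rfun, aeval_monomial, algebraMap_eq, monomial_eq, mul_comm _ a, C_mul, mul_assoc]
  congr 1
  simp only [Finsupp.prod, mul_pow, prod_mul_distrib, ← map_pow, ← map_prod]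

lemma coeff_Rfun (f : MvPolynomial (Fin n ⊕ Fin n) ℂ) (m : (Fin n ⊕ Fin n) →₀ ℕ) :
    (Rfun ω f).coeff m = (m.prod fun i e => lamRot ω i ^ e) * f.coeff m := by
  induction f using MvPolynomial.induction_on' with
  | monomial d a =>
    rw [Rfun_monomial, coeff_monomial, coeff_monomial]
    split_ifs with h
    · rw [h]
    · rw [mul_zero]
  | add f g hf hg => rw [Rfun, map_add, coeff_add, ← Rfun, ← Rfun, hf, hg, coeff_add, mul_add]

lemma coeff_RVF (V : Fin n ⊕ Fin n → MvPolynomial (Fin n ⊕ Fin n) ℂ) (l : Fin n ⊕ Fin n)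
    (m : (Fin n ⊕ Fin n) →₀ ℕ) : (RVF ω V l).coeff m = (cEig ω m l + 1) * (V l).coeff m := by
  rw [RVF, coeff_C_mul, coeff_Rfun, cEig, sub_add_cancel, mul_assoc]

lemma coeff_RVF_sub (V : Fin n ⊕ Fin n → MvPolynomial (Fin n ⊕ Fin n) ℂ) (l : Fin n ⊕ Fin n)
    (m : (Fin n ⊕ Fin n) →₀ ℕ) : ((RVF ω V - V) l).coeff m = cEig ω m l * (V l).coeff m := by
  rw [Pi.sub_apply, coeff_sub, coeff_RVF]
  ring

lemma norm_cEig_add_one (m : (Fin n ⊕ Fin n) →₀ ℕ) (l : Fin n ⊕ Fin n) :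
    ‖cEig ω m l + 1‖ = 1 := by
  simp [cEig, Finsupp.prod, norm_lamRot]

lemma pnormP_RVF_le (V : Fin n ⊕ Fin n → MvPolynomial (Fin n ⊕ Fin n) ℂ) (l : Fin n ⊕ Fin n) :
    pnormP (RVF ω V l) ≤ pnormP (V l) := by
  simpa using pnormP_le_of_norm_coeff_le (c := 1) fun m => by
    rw [coeff_RVF, norm_mul, norm_cEig_add_one, one_mul]

lemma MvPolynomial.IsHomogeneous.RVF {V : Fin n ⊕ Fin n → MvPolynomial (Fin n ⊕ Fin n) ℂ}
    {l : Fin n ⊕ Fin n} {d : ℕ} (hV : (V l).IsHomogeneous d) :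
    (_root_.RVF ω V l).IsHomogeneous d := fun m hm =>
  hV (right_ne_zero_of_mul (by rwa [← coeff_RVF]))

end Rotation

lemma norm_le_of_homological {α : ℝ} {e x z u : ℂ} (hz : e * z = 0) (hx : x = e * u)
    (hα : x ≠ 0 → α ≤ ‖e‖) : α * ‖x‖ ≤ ‖e * x + z‖ ∧ ‖z‖ ≤ ‖e * x + z‖ := by
  rcases eq_or_ne x 0 with rfl | hx0
  · simp
  have he : e ≠ 0 := fun he => hx0 (by rw [hx, he, zero_mul])
  obtain rfl : z = 0 := (mul_eq_zero.mp hz).resolve_left he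
  rw [add_zero, norm_zero, norm_mul]
  exact ⟨mul_le_mul_of_nonneg_right (hα hx0) (norm_nonneg x), by positivity⟩

lemma vnormP_le_of_homological {n d : ℕ} {ω : Fin n → ℝ} {α : ℝ} (hα : 0 < α)
    {X Z U : Fin n ⊕ Fin n → MvPolynomial (Fin n ⊕ Fin n) ℂ}
    (hXh : ∀ l, (X l).IsHomogeneous d)
    (hdiv : ∀ (m : (Fin n ⊕ Fin n) →₀ ℕ) (l : Fin n ⊕ Fin n),
      (m.sum fun _ e => e) = d → cEig ω m l ≠ 0 → α ≤ ‖cEig ω m l‖)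
    (hZ : RVF ω Z - Z = 0) (hU : X = RVF ω U - U) :
    vnormP X ≤ α⁻¹ * vnormP (RVF ω X - X + Z) ∧ vnormP Z ≤ vnormP (RVF ω X - X + Z) := by
  have key : ∀ l m, α * ‖(X l).coeff m‖ ≤ ‖((RVF ω X - X + Z) l).coeff m‖ ∧
      ‖(Z l).coeff m‖ ≤ ‖((RVF ω X - X + Z) l).coeff m‖ := fun l m => by
    have hZm : cEig ω m l * (Z l).coeff m = 0 := by
      rw [← coeff_RVF_sub, hZ, Pi.zero_apply, coeff_zero]
    have hUm : (X l).coeff m = cEig ω m l * (U l).coeff m := by rw [← coeff_RVF_sub, ← hU]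
    rw [Pi.add_apply, coeff_add, coeff_RVF_sub]
    refine norm_le_of_homological hZm hUm fun hx => ?_
    exact hdiv m l ((hXh l).degree_eq hx) fun he => hx (by rw [hUm, he, zero_mul])
  constructor
  · refine vnormP_le_of_pnormP_le fun l => pnormP_le_of_norm_coeff_le fun m => ?_
    rw [le_inv_mul_iff₀ hα]
    exact (key l m).1
  · simpa using vnormP_le_of_pnormP_le (c := 1) fun l =>
      pnormP_le_of_norm_coeff_le fun m => by simpa using (key l m).2

section DivisorSequence

variable {n r : ℕ} {ω : Fin n → ℝ}

lemma alphaSeq_le_one (s : ℕ) : alphaSeq ω s ≤ 1 := by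
  induction s with
  | zero => rfl
  | succ s ih => exact (min_le_right _ _).trans ih

lemma alphaSeq_antitone : Antitone (alphaSeq ω) :=
  antitone_nat_of_succ_le fun _ => min_le_right _ _

variable (hα : ∀ s, 1 ≤ s → s ≤ r → 0 < alphaSeq ω s)
include hα

lemma Tseq_pos {s : ℕ} (hs : s ≤ r) : 0 < Tseq ω s := by
  induction s with
  | zero => exact one_pos
  | succ s ih => exact div_pos (ih (by omega)) (hα _ (by omega) hs)

lemma Tseq_mono {a b : ℕ} (hab : a ≤ b) (hb : b ≤ r) : Tseq ω a ≤ Tseq ω b := by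
  induction b, hab using Nat.le_induction with
  | base => rfl
  | succ b _ ih =>
    refine (ih (by omega)).trans ?_
    rw [Tseq, le_div_iff₀ (hα _ (by omega) hb)]
    exact mul_le_of_le_one_right (Tseq_pos hα (by omega)).le (alphaSeq_le_one _)

lemma one_le_Tseq {s : ℕ} (hs : s ≤ r) : 1 ≤ Tseq ω s :=
  Tseq_mono hα (Nat.zero_le s) hs

lemma Tseq_mul_le {a b c : ℕ} (habc : a + b ≤ c) (hc : c ≤ r) :
    Tseq ω a * Tseq ω b ≤ Tseq ω c := by
  refine le_trans ?_ (Tseq_mono hα habc hc)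
  induction b with
  | zero => rw [Tseq, mul_one, add_zero]
  | succ b ih =>
    rw [Tseq, ← mul_div_assoc, ← add_assoc, Tseq]
    exact div_le_div₀ (Tseq_pos hα (by omega)).le (ih (by omega)) (hα _ (by omega) (by omega))
      (alphaSeq_antitone (by omega))

end DivisorSequence

section Catalan

lemma catalan_pos (k : ℕ) : 0 < catalan k := by
  have h := Nat.centralBinom_pos k
  rw [← succ_mul_catalan_eq_centralBinom] at h
  exact Nat.pos_of_mul_pos_left h

lemma succ_succ_mul_catalan_succ (k : ℕ) :
    (k + 2) * catalan (k + 1) = (4 * k + 2) * catalan k := by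
  refine Nat.eq_of_mul_eq_mul_left (Nat.succ_pos k) ?_
  calc (k + 1) * ((k + 2) * catalan (k + 1)) = (k + 1) * (k + 1).centralBinom := by
        rw [← succ_mul_catalan_eq_centralBinom]
    _ = 2 * (2 * k + 1) * ((k + 1) * catalan k) := by
        rw [Nat.succ_mul_centralBinom_succ, succ_mul_catalan_eq_centralBinom]
    _ = (k + 1) * ((4 * k + 2) * catalan k) := by ring

lemma two_mul_catalan_le {k : ℕ} (hk : 1 ≤ k) : 2 * catalan k ≤ catalan (k + 1) := by
  refine Nat.le_of_mul_le_mul_left ?_ (show 0 < k + 2 by omega)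
  rw [succ_succ_mul_catalan_succ]
  nlinarith

lemma catalan_mul_two_pow_le {k t : ℕ} (hk : 1 ≤ k) (hkt : k ≤ t) :
    catalan k * 2 ^ (t - k) ≤ catalan t := by
  induction t, hkt using Nat.le_induction with
  | base => simp
  | succ t hkt ih =>
    rw [Nat.sub_add_comm hkt, pow_succ, ← mul_assoc]
    exact (Nat.mul_le_mul_right 2 ih).trans (by linarith [two_mul_catalan_le (hk.trans hkt)])

lemma ten_le_catalan {t : ℕ} (ht : 4 ≤ t) : (10 : ℝ) ≤ catalan t := by
  have h := catalan_mul_two_pow_le (k := 3) (t := t) (by omega) (by omega)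
  have h2 : 2 ≤ 2 ^ (t - 3) := Nat.le_self_pow (by omega) 2
  rw [catalan_three] at h
  exact_mod_cast (show 10 ≤ catalan t by omega)

lemma sum_catalan_mul_catalan (k : ℕ) :
    ∑ i ∈ range (k + 1), catalan i * catalan (k - i) = catalan (k + 1) := by
  rw [catalan_succ, ← Fin.sum_univ_eq_sum_range (fun i => catalan i * catalan (k - i))]

lemma two_mul_sum_weighted_catalan (k : ℕ) :
    2 * ∑ i ∈ range (k + 1), (i + 2) * (catalan i * catalan (k - i)) =
      (k + 4) * catalan (k + 1) := by
  set F : ℕ → ℕ := fun i => (i + 2) * (catalan i * catalan (k - i))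
  have hrefl : ∑ i ∈ range (k + 1), F (k - i) = ∑ i ∈ range (k + 1), F i := by
    simpa using sum_range_reflect F (k + 1)
  calc 2 * ∑ i ∈ range (k + 1), F i = ∑ i ∈ range (k + 1), (F (k - i) + F i) := by
        rw [sum_add_distrib, hrefl, two_mul]
    _ = ∑ i ∈ range (k + 1), (k + 4) * (catalan i * catalan (k - i)) := by
        refine sum_congr rfl fun i hi => ?_
        have hik : i ≤ k := Nat.lt_succ_iff.mp (mem_range.mp hi)
        simp only [F, Nat.sub_sub_self hik, mul_comm (catalan (k - i))]
        rw [← add_mul]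
        congr 1
        omega
    _ = (k + 4) * catalan (k + 1) := by rw [← mul_sum, sum_catalan_mul_catalan]

lemma sum_weighted_catalan (k : ℕ) :
    ∑ i ∈ range (k + 1), (i + 2 : ℝ) * (catalan i * catalan (k - i)) =
      (k + 4) * catalan (k + 1) / 2 := by
  have h := two_mul_sum_weighted_catalan k
  rw [eq_div_iff two_ne_zero, mul_comm]
  exact_mod_cast h

/-- From `C_(s-j) 2^(j-1) ≤ C_(s-1)` and `∑ j / 2^j = 2`. -/
lemma sum_mul_catalan_le {s : ℕ} (hs : 2 ≤ s) :
    ∑ j ∈ Ico 1 s, (j : ℝ) * catalan (s - j) ≤ 4 * catalan (s - 1) := by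
  have hterm : ∀ j ∈ Ico 1 s, (j : ℝ) * catalan (s - j) ≤ 2 * catalan (s - 1) * (j * (1 / 2) ^ j) :=
    fun j hj => by
    obtain ⟨hj1, hjs⟩ := mem_Ico.mp hj
    have h := catalan_mul_two_pow_le (k := s - j) (t := s - 1) (by omega) (by omega)
    rw [show s - 1 - (s - j) = j - 1 by omega] at h
    have h2 : (catalan (s - j) : ℝ) * 2 ^ (j - 1) ≤ catalan (s - 1) := by exact_mod_cast h
    have hj : (2 : ℝ) ^ j = 2 * 2 ^ (j - 1) := by rw [← pow_succ']; congr 1; omega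
    rw [one_div, inv_pow, hj]
    field_simp
    nlinarith [show (0 : ℝ) ≤ j from j.cast_nonneg]
  have hgeom := hasSum_coe_mul_geometric_of_norm_lt_one (𝕜 := ℝ) (r := 1 / 2) (by norm_num)
  calc ∑ j ∈ Ico 1 s, (j : ℝ) * catalan (s - j)
      ≤ ∑ j ∈ Ico 1 s, 2 * (catalan (s - 1) : ℝ) * (j * (1 / 2) ^ j) := sum_le_sum hterm
    _ = 2 * catalan (s - 1) * ∑ j ∈ Ico 1 s, (j * (1 / 2 : ℝ) ^ j) := by rw [mul_sum]
    _ ≤ 2 * catalan (s - 1) * ((1 / 2) / (1 - 1 / 2) ^ 2) := by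
        gcongr
        exact sum_le_hasSum _ (fun j _ => by positivity) hgeom
    _ = 4 * catalan (s - 1) := by ring

lemma succ_succ_mul_catalan_le_four_pow {t : ℕ} (ht : 1 ≤ t) : (t + 2) * catalan t ≤ 4 ^ t := by
  induction t, ht using Nat.le_induction with
  | base => simp
  | succ t ht ih =>
    refine Nat.le_of_mul_le_mul_left ?_ (show 0 < t + 2 by omega)
    have h := succ_succ_mul_catalan_succ t
    calc (t + 2) * ((t + 1 + 2) * catalan (t + 1)) = (t + 3) * ((4 * t + 2) * catalan t) := by
          rw [← h]; ring
      _ ≤ 4 * (t + 2) * ((t + 2) * catalan t) := by nlinarith [catalan_pos t]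
      _ ≤ (t + 2) * 4 ^ (t + 1) := by rw [pow_succ]; nlinarith

end Catalan

section MajorantCoefficients

/-- The coefficient `λ_s` of the inductive bounds on `‖X_s‖` and `‖Z_s‖`. -/
noncomputable def genCoeff (s : ℕ) : ℝ := if s ≤ 1 then 1 else (s + 1) * catalan (s - 1) / s

/-- The coefficient `ρ_m` of the bound `‖E_m f‖ ≤ τ_m ρ_m δ^m ‖f‖` on Lie transforms. -/
noncomputable def lieTransformCoeff (m : ℕ) : ℝ := if m = 0 then 1 else catalan m / 2

lemma genCoeff_nonneg (s : ℕ) : 0 ≤ genCoeff s := by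
  unfold genCoeff; split_ifs <;> positivity

lemma lieTransformCoeff_nonneg (m : ℕ) : 0 ≤ lieTransformCoeff m := by
  unfold lieTransformCoeff; split_ifs <;> positivity

lemma lieTransformCoeff_of_ne_zero {m : ℕ} (hm : m ≠ 0) :
    lieTransformCoeff m = catalan m / 2 := if_neg hm

lemma lieTransformCoeff_le_catalan (m : ℕ) : lieTransformCoeff m ≤ catalan m := by
  have := catalan_pos m
  unfold lieTransformCoeff; split_ifs with h
  · simp [h]
  · linarith [show (1 : ℝ) ≤ catalan m by exact_mod_cast this]

lemma mul_genCoeff_of_two_le {s : ℕ} (hs : 2 ≤ s) :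
    s * genCoeff s = (s + 1) * catalan (s - 1) := by
  rw [genCoeff, if_neg (by omega)]
  field_simp

lemma mul_genCoeff_le {s : ℕ} (hs : 1 ≤ s) : s * genCoeff s ≤ (s + 1) * catalan (s - 1) := by
  rcases hs.eq_or_lt with rfl | hs
  · norm_num [genCoeff]
  · exact (mul_genCoeff_of_two_le hs).le

lemma mul_genCoeff_le_four_pow {s : ℕ} (hs : 1 ≤ s) : s * genCoeff s ≤ 4 ^ (s - 1) := by
  rcases hs.eq_or_lt with rfl | hs
  · norm_num [genCoeff]
  · rw [mul_genCoeff_of_two_le hs]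
    obtain ⟨t, rfl⟩ : ∃ t, s = t + 1 := ⟨s - 1, by omega⟩
    exact_mod_cast succ_succ_mul_catalan_le_four_pow (by omega : 1 ≤ t)

lemma succ_mul_genCoeff_succ_le (j : ℕ) :
    (j + 1 : ℝ) * genCoeff (j + 1) ≤ (j + 2) * catalan j := by
  have h := mul_genCoeff_le (s := j + 1) (by omega)
  push_cast at h
  linarith

lemma sum_genCoeff_mul_lieTransformCoeff_le (k : ℕ) :
    ∑ j ∈ range (k + 1), (j + 1 : ℝ) * genCoeff (j + 1) * lieTransformCoeff (k - j) ≤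
      2 * (k + 1) * lieTransformCoeff (k + 1) := by
  rcases lt_or_ge k 2 with hk | hk
  · interval_cases k <;>
      norm_num [sum_range_succ, genCoeff, lieTransformCoeff, catalan_two]
  calc ∑ j ∈ range (k + 1), (j + 1 : ℝ) * genCoeff (j + 1) * lieTransformCoeff (k - j)
      ≤ ∑ j ∈ range (k + 1), (j + 2 : ℝ) * catalan j * catalan (k - j) :=
        sum_le_sum fun j _ => mul_le_mul (succ_mul_genCoeff_succ_le j)
          (lieTransformCoeff_le_catalan _) (lieTransformCoeff_nonneg _) (by positivity)
    _ = (k + 4) * catalan (k + 1) / 2 := by simp_rw [mul_assoc, sum_weighted_catalan]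
    _ ≤ 2 * (k + 1) * lieTransformCoeff (k + 1) := by
        rw [lieTransformCoeff_of_ne_zero (by omega)]
        have : (2 : ℝ) ≤ k := by exact_mod_cast hk
        nlinarith [show (0 : ℝ) ≤ catalan (k + 1) by positivity]

lemma add_sum_lieTransformCoeff_le_mul_genCoeff {s : ℕ} (hs : 1 ≤ s) :
    s + ∑ j ∈ Ico 1 s, (j : ℝ) * lieTransformCoeff (s - j) * (1 + genCoeff j) ≤
      s * genCoeff s := by
  rcases lt_or_ge s 5 with hs5 | hs5
  · interval_cases s <;>
      norm_num [sum_Ico_succ_top, genCoeff, lieTransformCoeff, catalan_two, catalan_three]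
  obtain ⟨t, rfl⟩ : ∃ t, s = t + 1 := ⟨s - 1, by omega⟩
  have hsplit : ∑ j ∈ Ico 1 (t + 1), (j : ℝ) * lieTransformCoeff (t + 1 - j) * (1 + genCoeff j) =
      (∑ j ∈ Ico 1 (t + 1), (j : ℝ) * catalan (t + 1 - j) +
        ∑ j ∈ Ico 1 (t + 1), (j * genCoeff j) * catalan (t + 1 - j)) / 2 := by
    rw [← sum_add_distrib, sum_div]
    refine sum_congr rfl fun j hj => ?_
    rw [lieTransformCoeff_of_ne_zero (by simp at hj; omega)]
    ring
  have hW := sum_mul_catalan_le (s := t + 1) (by omega)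
  have hXZ : ∑ j ∈ Ico 1 (t + 1), (j * genCoeff j) * catalan (t + 1 - j) ≤
      (t + 4) * catalan (t + 1) / 2 - (t + 2) * catalan t := by
    calc ∑ j ∈ Ico 1 (t + 1), (j * genCoeff j) * catalan (t + 1 - j)
        ≤ ∑ j ∈ Ico 1 (t + 1), ((j : ℝ) + 1) * catalan (j - 1) * catalan (t + 1 - j) :=
          sum_le_sum fun j hj => mul_le_mul_of_nonneg_right
            (mul_genCoeff_le (mem_Ico.mp hj).1) (by positivity)
      _ = ∑ i ∈ range t, (i + 2 : ℝ) * (catalan i * catalan (t - i)) := by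
          rw [sum_Ico_eq_sum_range, Nat.add_sub_cancel]
          refine sum_congr rfl fun i _ => ?_
          rw [show 1 + i - 1 = i by omega, show t + 1 - (1 + i) = t - i by omega]
          push_cast
          ring
      _ = (t + 4) * catalan (t + 1) / 2 - (t + 2) * catalan t := by
          rw [← sum_weighted_catalan, sum_range_succ, Nat.sub_self, catalan_zero]
          push_cast
          ring
  have hratio : ((t : ℝ) + 2) * catalan (t + 1) = (4 * t + 2) * catalan t := by
    exact_mod_cast succ_succ_mul_catalan_succ t
  have hc := ten_le_catalan (t := t) (by omega)
  have ht : (4 : ℝ) ≤ t := by exact_mod_cast (show 4 ≤ t by omega)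
  rw [Nat.add_sub_cancel] at hW
  rw [hsplit, mul_genCoeff_of_two_le (by omega), Nat.add_sub_cancel]
  push_cast
  suffices h : ((t : ℝ) + 2) * ((t + 1) + 2 * catalan t + (t + 4) * catalan (t + 1) / 4 -
      (t + 2) * catalan t / 2) ≤ (t + 2) * ((t + 2) * catalan t) by
    have := le_of_mul_le_mul_left h (by positivity)
    linarith
  nlinarith [mul_nonneg (sub_nonneg.mpr hc) (show (0 : ℝ) ≤ t ^ 2 - t by nlinarith)]

lemma genCoeff_mul_pow_le {s : ℕ} (hs : 1 ≤ s) {δ : ℝ} (hδ : 0 ≤ δ) :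
    genCoeff s * δ ^ (s - 1) ≤ (4 * δ) ^ (s - 1) / s := by
  have hs0 : (0 : ℝ) < s := by exact_mod_cast hs
  rw [mul_pow, le_div_iff₀ hs0, mul_right_comm, mul_comm _ (s : ℝ)]
  exact mul_le_mul_of_nonneg_right (mul_genCoeff_le_four_pow hs) (by positivity)

end MajorantCoefficients

section LieTransform

lemma EopF_zero {F : Type*} [AddCommGroup F] [Module ℂ F] (L : ℕ → F → F) (f : F) :
    EopF L 0 f = f := by
  rw [EopF, id]

lemma EopF_succ {F : Type*} [AddCommGroup F] [Module ℂ F] (L : ℕ → F → F) (k : ℕ) (f : F) :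
    EopF L (k + 1) f = ((k + 1 : ℕ) : ℂ)⁻¹ •
      ∑ j ∈ range (k + 1), ((j + 1 : ℕ) : ℂ) • L (j + 1) (EopF L (k - j) f) := by
  rw [EopF]
  simp only [Pi.smul_apply, Finset.sum_apply, Function.comp_apply]

variable {σ : Type*}

lemma pnormP_EopF_succ_le (L : ℕ → MvPolynomial σ ℂ → MvPolynomial σ ℂ) (k : ℕ)
    (f : MvPolynomial σ ℂ) {Q : ℝ} (hQ : 0 ≤ Q)
    (h : ∀ j ∈ range (k + 1), pnormP (L (j + 1) (EopF L (k - j) f)) ≤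
      genCoeff (j + 1) * lieTransformCoeff (k - j) * Q) :
    pnormP (EopF L (k + 1) f) ≤ 2 * lieTransformCoeff (k + 1) * Q := by
  rw [EopF_succ]
  refine (pnormP_smul_le _ _).trans ?_
  rw [norm_inv, Complex.norm_natCast, Nat.cast_succ]
  calc ((k : ℝ) + 1)⁻¹ * pnormP (∑ j ∈ range (k + 1),
        ((j + 1 : ℕ) : ℂ) • L (j + 1) (EopF L (k - j) f))
      ≤ ((k : ℝ) + 1)⁻¹ * ∑ j ∈ range (k + 1),
          ((j : ℝ) + 1) * (genCoeff (j + 1) * lieTransformCoeff (k - j) * Q) := by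
        refine mul_le_mul_of_nonneg_left ((pnormP_sum_le _ _).trans (sum_le_sum fun j hj => ?_))
          (by positivity)
        refine (pnormP_smul_le _ _).trans ?_
        rw [Complex.norm_natCast, Nat.cast_succ]
        exact mul_le_mul_of_nonneg_left (h j hj) (by positivity)
    _ = ((k : ℝ) + 1)⁻¹ * (∑ j ∈ range (k + 1),
          ((j : ℝ) + 1) * genCoeff (j + 1) * lieTransformCoeff (k - j)) * Q := by
        rw [mul_assoc, sum_mul]
        simp only [mul_assoc]
    _ ≤ ((k : ℝ) + 1)⁻¹ * (2 * (k + 1) * lieTransformCoeff (k + 1)) * Q := by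
        gcongr
        exact sum_genCoeff_mul_lieTransformCoeff_le k
    _ = 2 * lieTransformCoeff (k + 1) * Q := by
        field_simp

variable [Fintype σ] [DecidableEq σ] {Y : ℕ → σ → MvPolynomial σ ℂ} {M : ℕ}

lemma isHomogeneous_EopF_lieV (hYh : ∀ i, 1 ≤ i → i ≤ M → ∀ l, (Y i l).IsHomogeneous (i + 1))
    {f : MvPolynomial σ ℂ} {d : ℕ} (hf : f.IsHomogeneous d) {m : ℕ} (hm : m ≤ M) :
    (EopF (fun i => lieV (Y i)) m f).IsHomogeneous (d + m) := by
  induction m using Nat.strong_induction_on with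
  | _ m ih =>
    obtain _ | k := m
    · rwa [EopF_zero]
    rw [EopF_succ]
    refine (homogeneousSubmodule σ ℂ _).smul_mem _ (IsHomogeneous.sum _ _ _ fun j hj => ?_)
    have hjk := Nat.lt_succ_iff.mp (mem_range.mp hj)
    refine (homogeneousSubmodule σ ℂ _).smul_mem _ ?_
    have h := IsHomogeneous.lieV (hYh (j + 1) (by omega) (by omega))
      (ih (k - j) (by omega) (by omega))
    rwa [show j + 1 + (d + (k - j)) = d + (k + 1) by omega] at h

lemma pnormP_EopF_lieV_le {t τ : ℕ → ℝ} {δ A : ℝ} {R : ℕ}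
    (hδ : 0 ≤ δ) (hA : 0 ≤ A) (hRA : 2 * R * A ≤ δ)
    (hYh : ∀ i, 1 ≤ i → i ≤ M → ∀ l, (Y i l).IsHomogeneous (i + 1))
    (hY : ∀ i, 1 ≤ i → i ≤ M → vnormP (Y i) ≤ t i * genCoeff i * δ ^ (i - 1) * A)
    (hτ0 : 1 ≤ τ 0) (hτ : ∀ m ≤ M, 0 ≤ τ m)
    (htτ : ∀ j k, j ≤ k → k < M → t (j + 1) * τ (k - j) ≤ τ (k + 1))
    {f : MvPolynomial σ ℂ} {d : ℕ} (hf : f.IsHomogeneous d) {m : ℕ} (hm : m ≤ M)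
    (hdm : d + m ≤ R + 1) :
    pnormP (EopF (fun i => lieV (Y i)) m f) ≤ τ m * lieTransformCoeff m * δ ^ m * pnormP f := by
  induction m using Nat.strong_induction_on with
  | _ m ih =>
    obtain _ | k := m
    · simpa [EopF_zero, lieTransformCoeff] using
        le_mul_of_one_le_left (pnormP_nonneg f) hτ0
    have := pnormP_nonneg f
    have := hτ (k + 1) hm
    refine (pnormP_EopF_succ_le _ k f (Q := δ ^ (k + 1) * τ (k + 1) * pnormP f / 2)
      (by positivity) fun j hj => ?_).trans_eq (by ring)
    have hjk := Nat.lt_succ_iff.mp (mem_range.mp hj)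
    have hYj := hY (j + 1) (by omega) (by omega)
    rw [Nat.add_sub_cancel] at hYj
    have hdeg : ((d + (k - j) : ℕ) : ℝ) ≤ R := by exact_mod_cast (show d + (k - j) ≤ R by omega)
    have := genCoeff_nonneg (j + 1)
    have := lieTransformCoeff_nonneg (k - j)
    calc pnormP (lieV (Y (j + 1)) (EopF (fun i => lieV (Y i)) (k - j) f))
        ≤ (d + (k - j) : ℕ) * vnormP (Y (j + 1)) *
            pnormP (EopF (fun i => lieV (Y i)) (k - j) f) :=
          pnormP_lieV_le _ (isHomogeneous_EopF_lieV hYh hf (by omega))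
      _ ≤ R * (t (j + 1) * genCoeff (j + 1) * δ ^ j * A) *
            (τ (k - j) * lieTransformCoeff (k - j) * δ ^ (k - j) * pnormP f) :=
          mul_le_mul (mul_le_mul hdeg hYj (vnormP_nonneg _) (Nat.cast_nonneg _))
            (ih (k - j) (by omega) (by omega) (by omega)) (pnormP_nonneg _)
            (mul_nonneg (Nat.cast_nonneg _) ((vnormP_nonneg _).trans hYj))
      _ = (2 * R * A) * (genCoeff (j + 1) * lieTransformCoeff (k - j) * (δ ^ j * δ ^ (k - j)) *
            pnormP f / 2) * (t (j + 1) * τ (k - j)) := by ring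
      _ ≤ δ * (genCoeff (j + 1) * lieTransformCoeff (k - j) * δ ^ k * pnormP f / 2) *
            τ (k + 1) := by
          rw [← pow_add, Nat.add_sub_cancel' hjk]
          exact (mul_le_mul_of_nonneg_left (htτ j k hjk (by omega)) (by positivity)).trans
            (mul_le_mul_of_nonneg_right (mul_le_mul_of_nonneg_right hRA (by positivity))
              (hτ _ hm))
      _ = _ := by ring

end LieTransform

section GeneratingSequence

variable {n r : ℕ} {ω : Fin n → ℝ} {A δ : ℝ}
  {W X Z : ℕ → (Fin n ⊕ Fin n → MvPolynomial (Fin n ⊕ Fin n) ℂ)}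

lemma vnormP_EopF_lieV_W_le {C : ℝ} (hA : 0 ≤ A) (hC : 0 ≤ C) (hCδ : C ≤ δ)
    (hrA : 2 * r * A ≤ δ) (hα : ∀ s, 1 ≤ s → s ≤ r → 0 < alphaSeq ω s)
    (hWh : ∀ s, 1 ≤ s → ∀ l, (W s l).IsHomogeneous (s + 1))
    (hW : ∀ s, 1 ≤ s → vnormP (W s) ≤ C ^ (s - 1) * A) {s : ℕ} (hsr : s ≤ r)
    (hXh : ∀ i, 1 ≤ i → i < s → ∀ l, (X i l).IsHomogeneous (i + 1))
    (hX : ∀ i, 1 ≤ i → i < s → vnormP (X i) ≤ Tseq ω i * genCoeff i * δ ^ (i - 1) * A)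
    {j : ℕ} (hj : 1 ≤ j) (hjs : j < s) :
    vnormP (fun l => EopF (fun i => lieV (X i)) (s - j) (W j l)) ≤
      lieTransformCoeff (s - j) * (Tseq ω (s - 1) * δ ^ (s - 1) * A) := by
  have hδ : 0 ≤ δ := hC.trans hCδ
  have hE := vnormP_le_of_pnormP_le fun l =>
    pnormP_EopF_lieV_le (M := s - 1) (t := Tseq ω) (τ := Tseq ω) hδ hA hrA
      (fun i hi his => hXh i hi (by omega)) (fun i hi his => hX i hi (by omega))
      (one_le_Tseq hα (Nat.zero_le r)) (fun m hm => (Tseq_pos hα (by omega)).le)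
      (fun j k _ hk => Tseq_mul_le hα (by omega) (by omega)) (hWh j hj l) (m := s - j)
      (by omega) (by omega)
  have hδpow : C ^ (j - 1) * δ ^ (s - j) ≤ δ ^ (s - 1) := by
    calc C ^ (j - 1) * δ ^ (s - j) ≤ δ ^ (j - 1) * δ ^ (s - j) := by gcongr
      _ = δ ^ (s - 1) := by rw [← pow_add]; congr 1; omega
  have hT := Tseq_mono hα (show s - j ≤ s - 1 by omega) (by omega)
  have := lieTransformCoeff_nonneg (s - j)
  have := (Tseq_pos hα (show s - j ≤ r by omega)).le
  have := (Tseq_pos hα (show s - 1 ≤ r by omega)).le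
  calc _ ≤ Tseq ω (s - j) * lieTransformCoeff (s - j) * δ ^ (s - j) * (C ^ (j - 1) * A) :=
        hE.trans (by gcongr; exact hW j hj)
    _ = lieTransformCoeff (s - j) * (Tseq ω (s - j) * (C ^ (j - 1) * δ ^ (s - j)) * A) := by ring
    _ ≤ lieTransformCoeff (s - j) * (Tseq ω (s - 1) * δ ^ (s - 1) * A) := by gcongr

lemma vnormP_EopF_lieV_RVF_le (hA : 0 ≤ A) (hδ : 0 ≤ δ) (hrA : 2 * r * A ≤ δ)
    (hα : ∀ s, 1 ≤ s → s ≤ r → 0 < alphaSeq ω s) {s : ℕ} (hsr : s ≤ r)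
    (hXh : ∀ i, 1 ≤ i → i < s → ∀ l, (X i l).IsHomogeneous (i + 1))
    (hZh : ∀ i, 1 ≤ i → i < s → ∀ l, (Z i l).IsHomogeneous (i + 1))
    (hX : ∀ i, 1 ≤ i → i < s → vnormP (X i) ≤ Tseq ω i * genCoeff i * δ ^ (i - 1) * A)
    (hZ : ∀ i, 1 ≤ i → i < s → vnormP (Z i) ≤ Tseq ω (i - 1) * genCoeff i * δ ^ (i - 1) * A)
    {j : ℕ} (hj : 1 ≤ j) (hjs : j < s) :
    vnormP (fun l => EopF (fun i => lieV (Z i)) (s - j) (RVF ω (X j) l)) ≤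
      genCoeff j * lieTransformCoeff (s - j) * (Tseq ω (s - 1) * δ ^ (s - 1) * A) := by
  have hE := vnormP_le_of_pnormP_le fun l =>
    (pnormP_EopF_lieV_le (M := s - 1) (t := fun i => Tseq ω (i - 1))
      (τ := fun m => Tseq ω (m - 1)) hδ hA hrA
      (fun i hi his => hZh i hi (by omega)) (fun i hi his => hZ i hi (by omega))
      (one_le_Tseq hα (Nat.zero_le r)) (fun m hm => (Tseq_pos hα (by omega)).le)
      (fun j k _ hk => Tseq_mul_le hα (by omega) (by omega))
      ((hXh j hj hjs l).RVF ω) (m := s - j) (by omega) (by omega)).trans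
    (mul_le_mul_of_nonneg_left (pnormP_RVF_le ω (X j) l)
      (by have := (Tseq_pos hα (show s - j - 1 ≤ r by omega)).le
          have := lieTransformCoeff_nonneg (s - j); positivity))
  have hT := Tseq_mul_le hα (show s - j - 1 + j ≤ s - 1 by omega) (by omega)
  have := genCoeff_nonneg j
  have := lieTransformCoeff_nonneg (s - j)
  have := (Tseq_pos hα (show s - j - 1 ≤ r by omega)).le
  calc _ ≤ Tseq ω (s - j - 1) * lieTransformCoeff (s - j) * δ ^ (s - j) *
        (Tseq ω j * genCoeff j * δ ^ (j - 1) * A) := hE.trans (by gcongr; exact hX j hj hjs)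
    _ = genCoeff j * lieTransformCoeff (s - j) *
        (Tseq ω (s - j - 1) * Tseq ω j * (δ ^ (s - j) * δ ^ (j - 1)) * A) := by ring
    _ = genCoeff j * lieTransformCoeff (s - j) *
        (Tseq ω (s - j - 1) * Tseq ω j * δ ^ (s - 1) * A) := by
        rw [← pow_add, show s - j + (j - 1) = s - 1 by omega]
    _ ≤ genCoeff j * lieTransformCoeff (s - j) * (Tseq ω (s - 1) * δ ^ (s - 1) * A) := by gcongr

lemma vnormP_PsiRHS_le {C : ℝ} (hA : 0 ≤ A) (hC : 0 ≤ C) (hCδ : C ≤ δ)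
    (hrA : 2 * r * A ≤ δ) (hα : ∀ s, 1 ≤ s → s ≤ r → 0 < alphaSeq ω s)
    (hWh : ∀ s, 1 ≤ s → ∀ l, (W s l).IsHomogeneous (s + 1))
    (hW : ∀ s, 1 ≤ s → vnormP (W s) ≤ C ^ (s - 1) * A) {s : ℕ} (hs : 1 ≤ s) (hsr : s ≤ r)
    (hXh : ∀ i, 1 ≤ i → i < s → ∀ l, (X i l).IsHomogeneous (i + 1))
    (hZh : ∀ i, 1 ≤ i → i < s → ∀ l, (Z i l).IsHomogeneous (i + 1))
    (hX : ∀ i, 1 ≤ i → i < s → vnormP (X i) ≤ Tseq ω i * genCoeff i * δ ^ (i - 1) * A)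
    (hZ : ∀ i, 1 ≤ i → i < s → vnormP (Z i) ≤ Tseq ω (i - 1) * genCoeff i * δ ^ (i - 1) * A) :
    vnormP (PsiRHS ω W X Z s) ≤ Tseq ω (s - 1) * genCoeff s * δ ^ (s - 1) * A := by
  have hδ : 0 ≤ δ := hC.trans hCδ
  set K := Tseq ω (s - 1) * δ ^ (s - 1) * A
  have hT := one_le_Tseq hα (show s - 1 ≤ r by omega)
  have hK : 0 ≤ K := by positivity
  have hWs : vnormP (W s) ≤ K := calc
    _ ≤ C ^ (s - 1) * A := hW s hs
    _ ≤ 1 * δ ^ (s - 1) * A := by rw [one_mul]; gcongr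
    _ ≤ K := by simp only [K]; gcongr
  have hterm : ∀ j ∈ Ico 1 s,
      vnormP ((j : ℂ) • ((fun l => EopF (fun i => lieV (X i)) (s - j) (W j l)) -
        (fun l => EopF (fun i => lieV (Z i)) (s - j) (RVF ω (X j) l)))) ≤
      j * lieTransformCoeff (s - j) * (1 + genCoeff j) * K := fun j hj => by
    obtain ⟨hj1, hjs⟩ := mem_Ico.mp hj
    refine (vnormP_smul_le _ _).trans ?_
    rw [Complex.norm_natCast]
    calc _ ≤ (j : ℝ) *
          (lieTransformCoeff (s - j) * K + genCoeff j * lieTransformCoeff (s - j) * K) :=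
          mul_le_mul_of_nonneg_left ((vnormP_sub_le _ _).trans (add_le_add
            (vnormP_EopF_lieV_W_le hA hC hCδ hrA hα hWh hW hsr hXh hX hj1 hjs)
            (vnormP_EopF_lieV_RVF_le hA hδ hrA hα hsr hXh hZh hX hZ hj1 hjs))) (by positivity)
      _ = _ := by ring
  have hrec := add_sum_lieTransformCoeff_le_mul_genCoeff hs
  have hs0 : (0 : ℝ) < s := by exact_mod_cast hs
  calc vnormP (PsiRHS ω W X Z s)
      ≤ K + (s : ℝ)⁻¹ *
          ((∑ j ∈ Ico 1 s, (j : ℝ) * lieTransformCoeff (s - j) * (1 + genCoeff j)) * K) := by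
        refine (vnormP_add_le _ _).trans (add_le_add hWs ((vnormP_smul_le _ _).trans ?_))
        rw [norm_inv, Complex.norm_natCast, sum_mul]
        exact mul_le_mul_of_nonneg_left ((vnormP_sum_le _ _).trans (sum_le_sum hterm))
          (by positivity)
    _ ≤ K + (s : ℝ)⁻¹ * ((s * genCoeff s - s) * K) := by gcongr; linarith
    _ = Tseq ω (s - 1) * genCoeff s * δ ^ (s - 1) * A := by
        field_simp
        ring

theorem generating_sequence_bound {C : ℝ} (hA : 0 ≤ A) (hC : 0 ≤ C) (hCδ : C ≤ δ)
    (hrA : 2 * r * A ≤ δ) (hα : ∀ s, 1 ≤ s → s ≤ r → 0 < alphaSeq ω s)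
    (hdiv : ∀ s, 1 ≤ s → s ≤ r → ∀ (m : (Fin n ⊕ Fin n) →₀ ℕ) (l : Fin n ⊕ Fin n),
      (m.sum fun _ e => e) = s + 1 → cEig ω m l ≠ 0 → alphaSeq ω s ≤ ‖cEig ω m l‖)
    (hWh : ∀ s, 1 ≤ s → ∀ l, (W s l).IsHomogeneous (s + 1))
    (hXh : ∀ s, 1 ≤ s → s ≤ r → ∀ l, (X s l).IsHomogeneous (s + 1))
    (hZh : ∀ s, 1 ≤ s → s ≤ r → ∀ l, (Z s l).IsHomogeneous (s + 1))
    (hW : ∀ s, 1 ≤ s → vnormP (W s) ≤ C ^ (s - 1) * A)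
    (hsol : ∀ s, 1 ≤ s → s ≤ r →
      (RVF ω (X s) - X s) + Z s = PsiRHS ω W X Z s ∧ RVF ω (Z s) - Z s = 0 ∧
      ∃ U, X s = RVF ω U - U)
    {s : ℕ} (hs : 1 ≤ s) (hsr : s ≤ r) :
    vnormP (X s) ≤ Tseq ω s * genCoeff s * δ ^ (s - 1) * A ∧
      vnormP (Z s) ≤ Tseq ω (s - 1) * genCoeff s * δ ^ (s - 1) * A := by
  induction s using Nat.strong_induction_on with
  | _ s ih =>
    obtain ⟨hΨ, hZ, U, hU⟩ := hsol s hs hsr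
    have hΨle := vnormP_PsiRHS_le hA hC hCδ hrA hα hWh hW hs hsr
      (fun i hi his => hXh i hi (by omega)) (fun i hi his => hZh i hi (by omega))
      (fun i hi his => (ih i his hi (by omega)).1) (fun i hi his => (ih i his hi (by omega)).2)
    obtain ⟨hXle, hZle⟩ := vnormP_le_of_homological (hα s hs hsr) (hXh s hs hsr)
      (hdiv s hs hsr) hZ hU
    rw [hΨ] at hXle hZle
    refine ⟨hXle.trans ?_, hZle.trans hΨle⟩
    obtain ⟨t, rfl⟩ : ∃ t, s = t + 1 := ⟨s - 1, by omega⟩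
    calc _ ≤ (alphaSeq ω (t + 1))⁻¹ * (Tseq ω t * genCoeff (t + 1) * δ ^ t * A) :=
          mul_le_mul_of_nonneg_left hΨle (inv_nonneg.mpr (hα _ hs hsr).le)
      _ = _ := by rw [Tseq, Nat.add_sub_cancel]; ring

end GeneratingSequence

/-- estimate of the generating sequence: if `‖W_s‖ ≤ C^{s-1} A`
and the generating sequence `X_1,…,X_r` with normal form terms `Z_1,…,Z_r` is
produced by recursively solving the homological equations
`D_ω X_s + Z_s = Ψ_s` with `Z_s = P_𝒩 Ψ_s` (i.e. `D_ω Z_s = 0`) and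
`X_s = D_ω⁻¹ P_ℛ Ψ_s` (i.e. `X_s` in the range of `D_ω`), then for `1 ≤ s ≤ r`:
`‖X_s‖ ≤ T_s B_r^{s-1} A / s` and `‖Z_s‖ ≤ T_{s-1} B_r^{s-1} A / s`, with
`B_r = 4C + 8(r+2)A`. -/
theorem generating_sequence_estimate (n r : ℕ) (ω : Fin n → ℝ)
    (A C : ℝ) (hA : 0 < A) (hC : 0 ≤ C)
    (hαpos : ∀ s, 1 ≤ s → s ≤ r → 0 < alphaSeq ω s)
    (hdiv : ∀ s, 1 ≤ s → s ≤ r → ∀ (m : (Fin n ⊕ Fin n) →₀ ℕ) (l : Fin n ⊕ Fin n),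
      (m.sum fun _ e => e) = s + 1 → cEig ω m l ≠ 0 →
      alphaSeq ω s ≤ ‖cEig ω m l‖)
    (W X Z : ℕ → (Fin n ⊕ Fin n → MvPolynomial (Fin n ⊕ Fin n) ℂ))
    (hWh : ∀ s, 1 ≤ s → ∀ l, (W s l).IsHomogeneous (s + 1))
    (hXh : ∀ s, 1 ≤ s → s ≤ r → ∀ l, (X s l).IsHomogeneous (s + 1))
    (hZh : ∀ s, 1 ≤ s → s ≤ r → ∀ l, (Z s l).IsHomogeneous (s + 1))
    (hW : ∀ s, 1 ≤ s → vnormP (W s) ≤ C ^ (s - 1) * A)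
    (hsol : ∀ s, 1 ≤ s → s ≤ r →
      (RVF ω (X s) - X s) + Z s = PsiRHS ω W X Z s ∧
      RVF ω (Z s) - Z s = 0 ∧
      (∃ U : Fin n ⊕ Fin n → MvPolynomial (Fin n ⊕ Fin n) ℂ,
        X s = RVF ω U - U)) :
    ∀ s, 1 ≤ s → s ≤ r →
      vnormP (X s) ≤ Tseq ω s * ((4 * C + 8 * (r + 2) * A) ^ (s - 1) * A) / s ∧
      vnormP (Z s) ≤ Tseq ω (s - 1) * ((4 * C + 8 * (r + 2) * A) ^ (s - 1) * A) / s := by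
  intro s hs hsr
  have hδ : 0 ≤ C + 2 * (r + 2) * A := by positivity
  obtain ⟨hX, hZ⟩ := generating_sequence_bound (δ := C + 2 * (r + 2) * A) hA.le hC
    (by nlinarith) (by nlinarith) hαpos hdiv hWh hXh hZh hW hsol hs hsr
  have hcoeff : ∀ T : ℝ, 0 ≤ T → T * genCoeff s * (C + 2 * (r + 2) * A) ^ (s - 1) * A ≤
      T * ((4 * C + 8 * (r + 2) * A) ^ (s - 1) * A) / s := fun T hT => calc
    _ = T * A * (genCoeff s * (C + 2 * (r + 2) * A) ^ (s - 1)) := by ring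
    _ ≤ T * A * ((4 * (C + 2 * (r + 2) * A)) ^ (s - 1) / s) :=
        mul_le_mul_of_nonneg_left (genCoeff_mul_pow_le hs hδ) (by positivity)
    _ = _ := by ring
  exact ⟨hX.trans (hcoeff _ (Tseq_pos hαpos hsr).le),
    hZ.trans (hcoeff _ (Tseq_pos hαpos (by omega)).le)⟩
end

section
/- Let $T_X$ be the Lie transform operator generated by a sequence $X$ of polynomial vector fields (acting on formal power series as a graded operator). Then $T_X$ is an algebra homomorphism: for any two formal power series $f$ and $g$, $T_X(fg) = (T_X f)(T_X g)$, where the identity holds order by order in the grading; equivalently, for every $s \ge 0$, $E_s^X(fg) = \sum_{m+l=s} (E_m^X f)(E_l^X g)$. -/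
open Finset

/-!
Let `N` be the Euler operator `N (E_n) = n E_n`; the recursion reads
`N E_n = ∑_{j+k=n} j L_j E_k`. Since each `L_j` is a derivation and `N` is a derivation of the
Cauchy product `∑_{a+b=n} u_a v_b`, the sequence `∑_{a+b=n} E_a f E_b g` satisfies the same
recursion as `E_n (f g)`. Both start at `f g`, and the recursion determines its solution because
`n` is invertible for `n ≥ 1`.
-/

section Antidiagonal

variable {M : Type*} [AddCommMonoid M]

theorem sum_antidiagonal_antidiagonal_assoc (n : ℕ) (F : ℕ → ℕ → ℕ → M) :
    ∑ p ∈ antidiagonal n, ∑ q ∈ antidiagonal p.2, F p.1 q.1 q.2 =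
      ∑ p ∈ antidiagonal n, ∑ q ∈ antidiagonal p.1, F q.1 q.2 p.2 := by
  simp only [sum_sigma']
  apply sum_nbij' (fun ⟨⟨i, _⟩, ⟨j, k⟩⟩ ↦ ⟨(i + j, k), (i, j)⟩)
    (fun ⟨⟨_, k⟩, ⟨i, j⟩⟩ ↦ ⟨(i, j + k), (j, k)⟩) <;> aesop (add simp [add_assoc])

theorem sum_antidiagonal_antidiagonal_left_comm (n : ℕ) (F : ℕ → ℕ → ℕ → M) :
    ∑ p ∈ antidiagonal n, ∑ q ∈ antidiagonal p.2, F p.1 q.1 q.2 =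
      ∑ p ∈ antidiagonal n, ∑ q ∈ antidiagonal p.2, F q.1 p.1 q.2 := by
  simp only [sum_sigma']
  apply sum_nbij' (fun ⟨⟨i, _⟩, ⟨j, k⟩⟩ ↦ ⟨(j, i + k), (i, k)⟩)
    (fun ⟨⟨i, _⟩, ⟨j, k⟩⟩ ↦ ⟨(j, i + k), (i, k)⟩) <;> aesop (add simp [add_left_comm])

end Antidiagonal

/-- The `p.1 = 0` term vanishes, so this is the defining recursion of `EopF` for every `n`. -/
theorem natCast_smul_EopF {F : Type*} [AddCommGroup F] [Module ℂ F] (L : ℕ → F → F)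
    (n : ℕ) (f : F) :
    (n : ℂ) • EopF L n f = ∑ p ∈ antidiagonal n, (p.1 : ℂ) • L p.1 (EopF L p.2 f) := by
  cases n with
  | zero => simp
  | succ s =>
    have hs : ((s + 1 : ℕ) : ℂ) ≠ 0 := Nat.cast_ne_zero.2 s.succ_ne_zero
    rw [EopF, Pi.smul_apply, smul_smul, mul_inv_cancel₀ hs, one_smul, Nat.sum_antidiagonal_succ,
      Nat.cast_zero, zero_smul, zero_add,
      Nat.sum_antidiagonal_eq_sum_range_succ
        (fun i j => ((i + 1 : ℕ) : ℂ) • L (i + 1) (EopF L j f))]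
    simp only [Finset.sum_apply, Pi.smul_apply, Function.comp_apply]

section Recursion

variable {A : Type*} [Ring A] [Algebra ℂ A]

theorem natCast_smul_sum_antidiagonal_mul (u v : ℕ → A) (n : ℕ) :
    (n : ℂ) • ∑ p ∈ antidiagonal n, u p.1 * v p.2 =
      ∑ p ∈ antidiagonal n, ((p.1 : ℂ) • u p.1 * v p.2 + u p.1 * ((p.2 : ℂ) • v p.2)) := by
  rw [smul_sum]
  refine sum_congr rfl fun p hp => ?_
  rw [← mem_antidiagonal.1 hp, Nat.cast_add, add_smul, smul_mul_assoc, mul_smul_comm]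

theorem mul_apply_eq_sum_antidiagonal_of_recursion (L : ℕ → A →+ A)
    (hL : ∀ i a b, L i (a * b) = L i a * b + a * L i b) (E : ℕ → A → A)
    (hE₀ : ∀ a, E 0 a = a)
    (hE : ∀ (n : ℕ) a, (n : ℂ) • E n a = ∑ p ∈ antidiagonal n, (p.1 : ℂ) • L p.1 (E p.2 a))
    (n : ℕ) (f g : A) :
    E n (f * g) = ∑ p ∈ antidiagonal n, E p.1 f * E p.2 g := by
  induction n using Nat.strong_induction_on with
  | _ n ih =>
  rcases n.eq_zero_or_pos with rfl | hn
  · simp [hE₀]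
  refine smul_right_injective A (Nat.cast_ne_zero.2 hn.ne' : (n : ℂ) ≠ 0) ?_
  calc (n : ℂ) • E n (f * g)
      = ∑ p ∈ antidiagonal n, (p.1 : ℂ) • L p.1 (∑ q ∈ antidiagonal p.2, E q.1 f * E q.2 g) := by
        rw [hE]
        refine sum_congr rfl fun p hp => ?_
        rcases Nat.eq_zero_or_pos p.1 with h | h
        · simp [h]
        · rw [ih p.2 (by have := mem_antidiagonal.1 hp; omega)]
    _ = ∑ p ∈ antidiagonal n, ∑ q ∈ antidiagonal p.2, (p.1 : ℂ) • (L p.1 (E q.1 f) * E q.2 g) +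
          ∑ p ∈ antidiagonal n, ∑ q ∈ antidiagonal p.2,
            (p.1 : ℂ) • (E q.1 f * L p.1 (E q.2 g)) := by
        simp only [map_sum, hL, smul_sum, smul_add, sum_add_distrib]
    _ = ∑ p ∈ antidiagonal n, (∑ q ∈ antidiagonal p.1, (q.1 : ℂ) • L q.1 (E q.2 f)) * E p.2 g +
          ∑ p ∈ antidiagonal n,
            E p.1 f * ∑ q ∈ antidiagonal p.2, (q.1 : ℂ) • L q.1 (E q.2 g) := by
        rw [sum_antidiagonal_antidiagonal_assoc n fun j a b => (j : ℂ) • (L j (E a f) * E b g),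
          sum_antidiagonal_antidiagonal_left_comm n fun j a b => (j : ℂ) • (E a f * L j (E b g))]
        simp only [sum_mul, mul_sum, smul_mul_assoc, mul_smul_comm]
    _ = ∑ p ∈ antidiagonal n,
          ((p.1 : ℂ) • E p.1 f * E p.2 g + E p.1 f * ((p.2 : ℂ) • E p.2 g)) := by
        simp only [← hE, sum_add_distrib]
    _ = (n : ℂ) • ∑ p ∈ antidiagonal n, E p.1 f * E p.2 g :=
        (natCast_smul_sum_antidiagonal_mul (E · f) (E · g) n).symm

end Recursion

section LieDerivative

variable {σ : Type*} [Fintype σ] [DecidableEq σ]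

noncomputable def lieVAddHom (V : σ → MvPolynomial σ ℂ) :
    MvPolynomial σ ℂ →+ MvPolynomial σ ℂ where
  toFun := lieV V
  map_zero' := by simp [lieV]
  map_add' f g := by simp [lieV, mul_add, sum_add_distrib]

theorem lieV_mul (V : σ → MvPolynomial σ ℂ) (f g : MvPolynomial σ ℂ) :
    lieV V (f * g) = lieV V f * g + f * lieV V g := by
  simp only [lieV, MvPolynomial.pderiv_mul, mul_add, sum_add_distrib, sum_mul, mul_sum]
  congr 1 <;> exact sum_congr rfl fun l _ => by ring

end LieDerivative

theorem lie_transform_algebra_homomorphism_general {σ : Type*} [Fintype σ] [DecidableEq σ]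
    (X : ℕ → (σ → MvPolynomial σ ℂ)) :
    ∀ (s : ℕ) (f g : MvPolynomial σ ℂ),
      EopF (fun i => lieV (X i)) s (f * g) =
        ∑ m ∈ Finset.range (s + 1),
          EopF (fun i => lieV (X i)) m f * EopF (fun i => lieV (X i)) (s - m) g := by
  intro s f g
  rw [← Nat.sum_antidiagonal_eq_sum_range_succ fun m l =>
    EopF (fun i => lieV (X i)) m f * EopF (fun i => lieV (X i)) l g]
  exact mul_apply_eq_sum_antidiagonal_of_recursion (fun i => lieVAddHom (X i))
    (fun i => lieV_mul (X i)) (EopF fun i => lieV (X i)) (fun _ => by simp [EopF])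
    (natCast_smul_EopF _) s f g

/-- the Lie transform is an algebra homomorphism order by order:
`E_s(fg) = ∑_{m+l=s} (E_m f)(E_l g)`. -/
theorem lie_transform_algebra_homomorphism {σ : Type*} [Fintype σ] [DecidableEq σ]
    (X : ℕ → (σ → MvPolynomial σ ℂ))
    (hX : ∀ j, 1 ≤ j → ∀ l, (X j l).IsHomogeneous (j + 1)) :
    ∀ (s : ℕ) (f g : MvPolynomial σ ℂ),
      EopF (fun i => lieV (X i)) s (f * g) =
        ∑ m ∈ Finset.range (s + 1),
          EopF (fun i => lieV (X i)) m f * EopF (fun i => lieV (X i)) (s - m) g :=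
  lie_transform_algebra_homomorphism_general X
end
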